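/- arXiv:1011.5799 — 5 statements merged into one kernel-verified Lean document; each statement's English description precedes it below -/
import Mathlib

section
/- Let S be a semispray on ℝ^n × ℝ^n and let J be the tangent structure J(∂/∂xⁱ) = ∂/∂yⁱ, J(∂/∂yⁱ) = 0. For newtonoid vector fields X (those with J[S,X] = 0) define f ∗ X = fX + S(f)·JX for smooth functions f. Then for all smooth functions f, g and every newtonoid X: (i) f ∗ X is again a newtonoid, (ii) (fg) ∗ X = f ∗ (g ∗ X), and (iii) (f+g) ∗ X = f ∗ X + g ∗ X. Hence ∗ gives the set of newtonoids the structure of a module over the ring of smooth functions. -/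
/-- Lie bracket of vector fields on a normed space, in coordinates. -/
noncomputable def vbracket {E : Type*} [NormedAddCommGroup E] [NormedSpace ℝ E]
    (V W : E → E) (p : E) : E :=
  fderiv ℝ W p (V p) - fderiv ℝ V p (W p)

/-- The tangent structure `J(u,v) = (0,u)` on `TM ≅ ℝⁿ × ℝⁿ`. -/
noncomputable def tangJ (n : ℕ) :
    ((Fin n → ℝ) × (Fin n → ℝ)) →ₗ[ℝ] ((Fin n → ℝ) × (Fin n → ℝ)) :=
  (LinearMap.inr ℝ (Fin n → ℝ) (Fin n → ℝ)).comp
    (LinearMap.fst ℝ (Fin n → ℝ) (Fin n → ℝ))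

/-- `X` is a newtonoid of the semispray `S`: `J[S,X] = 0`. -/
def IsNewtonoid {n : ℕ} (S X : (Fin n → ℝ) × (Fin n → ℝ) → (Fin n → ℝ) × (Fin n → ℝ)) : Prop :=
  ∀ p, tangJ n (vbracket S X p) = 0

/-- `f ∗ X = fX + S(f)·JX`. -/
noncomputable def starProd {n : ℕ}
    (S : (Fin n → ℝ) × (Fin n → ℝ) → (Fin n → ℝ) × (Fin n → ℝ))
    (f : (Fin n → ℝ) × (Fin n → ℝ) → ℝ)
    (X : (Fin n → ℝ) × (Fin n → ℝ) → (Fin n → ℝ) × (Fin n → ℝ))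
    (p : (Fin n → ℝ) × (Fin n → ℝ)) : (Fin n → ℝ) × (Fin n → ℝ) :=
  f p • X p + (fderiv ℝ f p (S p)) • tangJ n (X p)

lemma tangJ_apply {n : ℕ} (v : (Fin n → ℝ) × (Fin n → ℝ)) : tangJ n v = (0, v.1) := rfl

/-- For newtonoid vector fields `X` of a semispray `S` and smooth `f, g`:
`f ∗ X` is again a newtonoid, `(fg) ∗ X = f ∗ (g ∗ X)` and
`(f+g) ∗ X = f ∗ X + g ∗ X`; hence `∗` gives the newtonoids a
module structure over smooth functions. -/
theorem stmt4 (n : ℕ)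
    (G : (Fin n → ℝ) × (Fin n → ℝ) → (Fin n → ℝ)) (hG : ContDiff ℝ (⊤ : ℕ∞) G)
    (S : (Fin n → ℝ) × (Fin n → ℝ) → (Fin n → ℝ) × (Fin n → ℝ))
    (hS : S = fun p => (p.2, -(2 : ℝ) • G p))
    (f g : (Fin n → ℝ) × (Fin n → ℝ) → ℝ)
    (hf : ContDiff ℝ (⊤ : ℕ∞) f) (hg : ContDiff ℝ (⊤ : ℕ∞) g)
    (X : (Fin n → ℝ) × (Fin n → ℝ) → (Fin n → ℝ) × (Fin n → ℝ))
    (hX : ContDiff ℝ (⊤ : ℕ∞) X) (hXn : IsNewtonoid S X) :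
    IsNewtonoid S (starProd S f X) ∧
      (∀ p, starProd S (fun q => f q * g q) X p = starProd S f (starProd S g X) p) ∧
      (∀ p, starProd S (fun q => f q + g q) X p = starProd S f X p + starProd S g X p) := by
  have hSd : ContDiff ℝ (⊤ : ℕ∞) S := by
    rw [hS]; exact contDiff_snd.prodMk (hG.const_smul (-(2:ℝ)))
  -- derivative of S, first component
  have hDS : ∀ p (u : (Fin n → ℝ) × (Fin n → ℝ)), (fderiv ℝ S p u).1 = u.2 := by
    intro p u
    have h1 : HasFDerivAt S ((ContinuousLinearMap.snd ℝ (Fin n → ℝ) (Fin n → ℝ)).prod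
        (fderiv ℝ (fun q => -(2:ℝ) • G q) p)) p := by
      rw [hS]
      exact hasFDerivAt_snd.prodMk ((hG.const_smul (-(2:ℝ))).differentiable (by simp) p).hasFDerivAt
    rw [show fderiv ℝ S p = _ from h1.fderiv]
    rfl
  have hiff : ∀ Z : (Fin n → ℝ) × (Fin n → ℝ) → (Fin n → ℝ) × (Fin n → ℝ),
      IsNewtonoid S Z ↔ ∀ p, (fderiv ℝ Z p (S p)).1 = (Z p).2 := by
    intro Z
    unfold IsNewtonoid vbracket
    constructor
    · intro h p
      have := h p
      rw [tangJ_apply, Prod.ext_iff] at this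
      have h2 := this.2
      simpa [sub_eq_zero, hDS] using h2
    · intro h p
      rw [tangJ_apply, Prod.ext_iff]
      refine ⟨rfl, ?_⟩
      simp [sub_eq_zero, hDS, h p]
  have hXn' := (hiff X).mp hXn
  -- smoothness of f ↦ S(f)
  have hDfS : ContDiff ℝ (⊤ : ℕ∞) (fun p => fderiv ℝ f p (S p)) :=
    (hf.fderiv_right (by simp)).clm_apply hSd
  refine ⟨?_, ?_, ?_⟩
  · rw [hiff]
    intro p
    set Y := starProd S f X with hY
    have hY1 : (fun q => (Y q).1) = fun q => f q • (X q).1 := by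
      funext q
      simp [hY, starProd, tangJ_apply]
    have hYd : ContDiff ℝ (⊤ : ℕ∞) Y := by
      have : ContDiff ℝ (⊤ : ℕ∞) (fun p => tangJ n (X p)) := by
        simp only [tangJ_apply]
        exact contDiff_const.prodMk hX.fst
      exact (hf.smul hX).add (hDfS.smul this)
    have hfst : HasFDerivAt (fun q => (Y q).1)
        ((ContinuousLinearMap.fst ℝ (Fin n → ℝ) (Fin n → ℝ)).comp (fderiv ℝ Y p)) p :=
      ((hYd.differentiable (by simp) p).hasFDerivAt).fst
    have h2 : HasFDerivAt (fun q => f q • (X q).1)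
        (f p • ((ContinuousLinearMap.fst ℝ (Fin n → ℝ) (Fin n → ℝ)).comp (fderiv ℝ X p))
          + (fderiv ℝ f p).smulRight (X p).1) p :=
      ((hf.differentiable (by simp) p).hasFDerivAt).smul
        ((hX.differentiable (by simp) p).hasFDerivAt).fst
    rw [hY1] at hfst
    have h3 := hfst.unique h2
    have h4 : (fderiv ℝ Y p (S p)).1
        = f p • (fderiv ℝ X p (S p)).1 + (fderiv ℝ f p (S p)) • (X p).1 := by
      have := congrArg (fun L => L (S p)) h3
      simpa using this
    rw [h4, hXn' p]
    simp [hY, starProd, tangJ_apply]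
  · intro p
    have hfd := (hf.differentiable (by simp)).differentiableAt (x := p)
    have hgd := (hg.differentiable (by simp)).differentiableAt (x := p)
    simp only [starProd, tangJ_apply, fderiv_fun_mul hfd hgd]
    simp only [ContinuousLinearMap.add_apply, ContinuousLinearMap.smul_apply, smul_eq_mul]
    apply Prod.ext <;>
        simp only [Prod.fst_add, Prod.snd_add, Prod.smul_fst, Prod.smul_snd,
          smul_zero, add_zero, zero_add, smul_smul, smul_add]
    module
  · intro p
    have hfd := (hf.differentiable (by simp)).differentiableAt (x := p)
    have hgd := (hg.differentiable (by simp)).differentiableAt (x := p)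
    simp only [starProd, tangJ_apply, fderiv_fun_add hfd hgd]
    simp [Prod.ext_iff, add_smul, smul_add]
    abel
end

section
/- Let D and J be linear endomorphisms of a vector space of smooth vector fields such that J^{k+1} = 0 and J∘D∘J = J²∘D - J (the bracket identity J L_S J = J² L_S - J for the order-k tangent structure). Define π = Σ_{α=0}^{k} (1/α!) J^α ∘ D^α. Then (J∘D)∘π = 0, i.e. the image of π is contained in the kernel of J∘D. -/
/-!
The bracket relation `J D J = J² D - J` commutes `J D` past `J ^ n` at the cost of `-n J ^ n`.
Applied to the terms of `π`, this makes `J D π` telescope: the `-n J ^ n D ^ n / n!` produced by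
the `n`-th term cancels the `J ^ n D ^ n / (n-1)!` produced by the previous one, leaving only
`J ^ (k+1) D ^ (k+1) / k!`, which vanishes because `J ^ (k+1) = 0`.
-/

open Finset

section BracketRelation

variable {A : Type*} [Ring A] {D J : A}

theorem mul_mul_pow_of_mul_mul_eq (hDJ : J * D * J = J ^ 2 * D - J) (n : ℕ) :
    J * D * J ^ n = J ^ (n + 1) * D - n • J ^ n := by
  induction n with
  | zero => simp
  | succ n ih =>
    calc J * D * J ^ (n + 1) = (J * D * J ^ n) * J := by simp only [pow_succ, mul_assoc]
      _ = J ^ n * (J * D * J) - n • J ^ (n + 1) := by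
        rw [ih, sub_mul, smul_mul_assoc, ← pow_succ, pow_succ]
        simp only [mul_assoc]
      _ = J ^ (n + 2) * D - (n + 1) • J ^ (n + 1) := by
        rw [hDJ, mul_sub, ← mul_assoc, ← pow_add, ← pow_succ, add_smul, one_smul]
        abel

variable {R : Type*} [Field R] [CharZero R] [Algebra R A]

theorem mul_mul_sum_pow_mul_pow_div_factorial (hDJ : J * D * J = J ^ 2 * D - J) (k : ℕ) :
    J * D * ∑ n ∈ range (k + 1), ((n.factorial : R)⁻¹ • (J ^ n * D ^ n)) =
      (k.factorial : R)⁻¹ • (J ^ (k + 1) * D ^ (k + 1)) := by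
  induction k with
  | zero => simp
  | succ k ih =>
    have hterm : J * D * J ^ (k + 1) * D ^ (k + 1) =
        J ^ (k + 2) * D ^ (k + 2) - (k + 1 : ℕ) • (J ^ (k + 1) * D ^ (k + 1)) := by
      rw [mul_mul_pow_of_mul_mul_eq hDJ, sub_mul, smul_mul_assoc, mul_assoc, ← pow_succ']
    have hcoef : ((k + 1).factorial : R)⁻¹ * (k + 1 : ℕ) = (k.factorial : R)⁻¹ := by
      rw [Nat.factorial_succ, Nat.cast_mul, mul_inv, mul_comm, ← mul_assoc,
        mul_inv_cancel₀ (Nat.cast_ne_zero.mpr k.succ_ne_zero), one_mul]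
    rw [sum_range_succ, mul_add, ih, mul_smul_comm, ← mul_assoc, hterm, smul_sub,
      ← Nat.cast_smul_eq_nsmul R, smul_smul, hcoef]
    abel

end BracketRelation

/-- Operator-theoretic core of Lemma 3.3: if `J^{k+1} = 0` and
`J∘D∘J = J²∘D - J`, then the operator `π = Σ_{α=0}^k (1/α!) J^α∘D^α`
satisfies `(J∘D)∘π = 0`, i.e. `Im π ⊆ Ker (J∘D)`. -/
theorem stmt10 {M : Type*} [AddCommGroup M] [Module ℝ M]
    (k : ℕ) (D J : M →ₗ[ℝ] M)
    (hJ : J ^ (k + 1) = 0)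
    (hDJ : J ∘ₗ D ∘ₗ J = (J ^ 2) ∘ₗ D - J) :
    (J ∘ₗ D) ∘ₗ
        (∑ α ∈ Finset.range (k + 1),
          ((α.factorial : ℝ))⁻¹ • ((J ^ α) ∘ₗ (D ^ α))) = 0 := by
  simp only [← Module.End.mul_eq_comp, ← mul_assoc] at hDJ ⊢
  rw [mul_mul_sum_pow_mul_pow_div_factorial hDJ, hJ, zero_mul, smul_zero]
end

section
/- Let G : ℝ³ → ℝ be smooth in variables (x, y₁, y₂) and let S = y₁ ∂/∂x + 2y₂ ∂/∂y₁ - 3G ∂/∂y₂ be the associated semispray of order 2 (for the third-order ODE x''' + 3!·G(x, x'/1!, x''/2!) = 0). Define R₀ = 3 ∂G/∂x - 3 (∂G/∂y₁)(∂G/∂y₂) - (1/2) S²(∂G/∂y₂) + (∂G/∂y₂)³ and R₁ = 3 ∂G/∂y₁ - (3/2)(∂G/∂y₂)² - (3/2) S(∂G/∂y₂). Then the Wuenschmann invariant W₃ = -(1/2)S²(∂G/∂y₂) - 3(∂G/∂y₂)S(∂G/∂y₂) + 3S(∂G/∂y₁) - 2(∂G/∂y₂)³ + 6(∂G/∂y₁)(∂G/∂y₂)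 - 6 ∂G/∂x satisfies W₃ = S(R₁) - 2R₀. -/
/-- `∂f/∂x` on `ℝ³` with coordinates `(x, y₁, y₂)`. -/
noncomputable def dX3 (f : ℝ × ℝ × ℝ → ℝ) (p : ℝ × ℝ × ℝ) : ℝ :=
  fderiv ℝ f p (1, 0, 0)

/-- `∂f/∂y₁`. -/
noncomputable def dY13 (f : ℝ × ℝ × ℝ → ℝ) (p : ℝ × ℝ × ℝ) : ℝ :=
  fderiv ℝ f p (0, 1, 0)

/-- `∂f/∂y₂`. -/
noncomputable def dY23 (f : ℝ × ℝ × ℝ → ℝ) (p : ℝ × ℝ × ℝ) : ℝ :=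
  fderiv ℝ f p (0, 0, 1)

/-- The semispray derivative `S(f) = y₁ ∂f/∂x + 2y₂ ∂f/∂y₁ - 3G ∂f/∂y₂`
of the order-2 semispray of the third-order ODE `x''' + 3!·G = 0`. -/
noncomputable def S3 (G f : ℝ × ℝ × ℝ → ℝ) (p : ℝ × ℝ × ℝ) : ℝ :=
  fderiv ℝ f p (p.2.1, 2 * p.2.2, -(3 * G p))

/-- The Wuenschmann invariant `W₃` of a scalar third-order ODE equals
`∇R₁ - 2R₀ = S(R₁) - 2R₀` in terms of the curvature components of the
Jacobi endomorphism. -/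
theorem stmt11 (G : ℝ × ℝ × ℝ → ℝ) (hG : ContDiff ℝ (⊤ : ℕ∞) G)
    (R₀ R₁ W₃ : ℝ × ℝ × ℝ → ℝ)
    (hR₀ : R₀ = fun p => 3 * dX3 G p - 3 * dY13 G p * dY23 G p
      - (1/2) * S3 G (S3 G (dY23 G)) p + (dY23 G p)^3)
    (hR₁ : R₁ = fun p => 3 * dY13 G p - (3/2) * (dY23 G p)^2
      - (3/2) * S3 G (dY23 G) p)
    (hW₃ : W₃ = fun p => -(1/2) * S3 G (S3 G (dY23 G)) p
      - 3 * dY23 G p * S3 G (dY23 G) p + 3 * S3 G (dY13 G) p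
      - 2 * (dY23 G p)^3 + 6 * dY13 G p * dY23 G p - 6 * dX3 G p) :
    ∀ p, W₃ p = S3 G R₁ p - 2 * R₀ p := by
  have hGfd : ContDiff ℝ (⊤ : ℕ∞) (fderiv ℝ G) := hG.fderiv_right (by simp)
  have hf1 : ContDiff ℝ (⊤ : ℕ∞) (dY13 G) := hGfd.clm_apply contDiff_const
  have hf2 : ContDiff ℝ (⊤ : ℕ∞) (dY23 G) := hGfd.clm_apply contDiff_const
  have hv : ContDiff ℝ (⊤ : ℕ∞) (fun p : ℝ × ℝ × ℝ => ((p.2.1, 2 * p.2.2, -(3 * G p)) : ℝ × ℝ × ℝ)) := by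
    refine (contDiff_fst.comp contDiff_snd).prodMk (ContDiff.prodMk ?_ ?_)
    · exact contDiff_const.mul (contDiff_snd.comp contDiff_snd)
    · exact (contDiff_const.mul hG).neg
  have hf3 : ContDiff ℝ (⊤ : ℕ∞) (S3 G (dY23 G)) :=
    (hf2.fderiv_right (by simp)).clm_apply hv
  have h1 : Differentiable ℝ (dY13 G) := hf1.differentiable (by simp)
  have h2 : Differentiable ℝ (dY23 G) := hf2.differentiable (by simp)
  have h3 : Differentiable ℝ (S3 G (dY23 G)) := hf3.differentiable (by simp)
  intro p
  set v : ℝ × ℝ × ℝ := (p.2.1, 2 * p.2.2, -(3 * G p)) with hvdef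
  have hA : HasFDerivAt (fun q => 3 * dY13 G q) ((3:ℝ) • fderiv ℝ (dY13 G) p) p :=
    (h1 p).hasFDerivAt.const_mul 3
  have hsq : HasFDerivAt (fun q => (dY23 G q)^2)
      (dY23 G p • fderiv ℝ (dY23 G) p + dY23 G p • fderiv ℝ (dY23 G) p) p := by
    have := (h2 p).hasFDerivAt.mul (h2 p).hasFDerivAt
    simp only [pow_two]; exact this
  have hB : HasFDerivAt (fun q => (3/2 : ℝ) * (dY23 G q)^2)
      ((3/2 : ℝ) • (dY23 G p • fderiv ℝ (dY23 G) p + dY23 G p • fderiv ℝ (dY23 G) p)) p :=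
    hsq.const_mul (3/2)
  have hC : HasFDerivAt (fun q => (3/2 : ℝ) * S3 G (dY23 G) q)
      ((3/2 : ℝ) • fderiv ℝ (S3 G (dY23 G)) p) p :=
    (h3 p).hasFDerivAt.const_mul (3/2)
  have H : HasFDerivAt R₁
      ((3:ℝ) • fderiv ℝ (dY13 G) p
        - (3/2 : ℝ) • (dY23 G p • fderiv ℝ (dY23 G) p + dY23 G p • fderiv ℝ (dY23 G) p)
        - (3/2 : ℝ) • fderiv ℝ (S3 G (dY23 G)) p) p := by
    rw [hR₁]; exact (hA.sub hB).sub hC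
  have hSR : S3 G R₁ p = 3 * S3 G (dY13 G) p - 3 * dY23 G p * S3 G (dY23 G) p
      - (3/2) * S3 G (S3 G (dY23 G)) p := by
    have : S3 G R₁ p = fderiv ℝ R₁ p v := rfl
    rw [this, H.fderiv]
    simp only [ContinuousLinearMap.sub_apply, ContinuousLinearMap.add_apply,
      ContinuousLinearMap.smul_apply, smul_eq_mul]
    have e1 : fderiv ℝ (dY13 G) p v = S3 G (dY13 G) p := rfl
    have e2 : fderiv ℝ (dY23 G) p v = S3 G (dY23 G) p := rfl
    have e3 : fderiv ℝ (S3 G (dY23 G)) p v = S3 G (S3 G (dY23 G)) p := rfl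
    rw [e1, e2, e3]; ring
  rw [hSR, hR₀, hW₃]; ring
end

section
/- Let S = y₁ⁱ∂/∂xⁱ + 2y₂ⁱ∂/∂y₁ⁱ + ... + k·y_kⁱ∂/∂y_{k-1}ⁱ - (k+1)Gⁱ∂/∂y_kⁱ be a semispray of order k on (ℝ^n)^{k+1} and let J be the shift tangent structure of order k. Then for every smooth vector field X and every α ∈ {1,...,k}, one has J( [S, J^α X] - J^α[S, X] + α J^{α-1}X ) = 0, i.e. [S, J^α X] - J^α[S,X] + α J^{α-1}X lies in Ker J = Im J^k. -/
/-- The coordinate model of the tangent structure of order `k` on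
`T^kM ≅ (ℝⁿ)^{k+1}`: the shift `J(v₀, ..., v_k) = (0, v₀, ..., v_{k-1})`. -/
noncomputable def shiftJ (n k : ℕ) :
    ((Fin (k+1) → (Fin n → ℝ)) →ₗ[ℝ] (Fin (k+1) → (Fin n → ℝ))) where
  toFun v i := if h : (i : ℕ) = 0 then 0
    else v ⟨(i : ℕ) - 1, Nat.lt_of_le_of_lt (Nat.sub_le _ _) i.isLt⟩
  map_add' u v := by funext i; by_cases h : i = 0 <;> simp [h]
  map_smul' c v := by funext i; by_cases h : i = 0 <;> simp [h]

/-- The semispray of order `k` with coefficients `G`: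
`S = y₁ⁱ∂/∂xⁱ + 2y₂ⁱ∂/∂y₁ⁱ + ... + k·y_kⁱ∂/∂y_{k-1}ⁱ - (k+1)Gⁱ∂/∂y_kⁱ`. -/
noncomputable def semisprayK (n k : ℕ)
    (G : (Fin (k+1) → (Fin n → ℝ)) → (Fin n → ℝ))
    (p : Fin (k+1) → (Fin n → ℝ)) : Fin (k+1) → (Fin n → ℝ) :=
  fun α => if h : (α : ℕ) < k
    then (((α : ℕ) + 1 : ℝ)) • p ⟨(α : ℕ) + 1, by omega⟩
    else (-((k : ℝ) + 1)) • G p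

lemma shiftJ_apply (n k : ℕ) (v : Fin (k+1) → Fin n → ℝ) (i : Fin (k+1)) :
    shiftJ n k v i = if h : (i : ℕ) = 0 then 0
      else v ⟨(i : ℕ) - 1, Nat.lt_of_le_of_lt (Nat.sub_le _ _) i.isLt⟩ := rfl

lemma shiftJ_pow_apply (n k : ℕ) (α : ℕ) (v : Fin (k+1) → Fin n → ℝ) (i : Fin (k+1)) :
    ((shiftJ n k ^ α) v) i =
      if h : (i : ℕ) < α then 0 else v ⟨(i : ℕ) - α, by omega⟩ := by
  induction α generalizing v i with
  | zero => simp
  | succ α ih =>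
    have h0 : ((shiftJ n k ^ (α+1)) v) i = ((shiftJ n k ^ α) (shiftJ n k v)) i := by
      rw [pow_succ]; rfl
    rw [h0, ih]
    by_cases h : (i : ℕ) < α
    · rw [dif_pos h, dif_pos (by omega)]
    · rw [dif_neg h, shiftJ_apply]
      by_cases h2 : (i : ℕ) - α = 0
      · rw [dif_pos h2, dif_pos (by omega)]
      · rw [dif_neg h2, dif_neg (by omega)]
        refine congrArg v ?_
        ext
        simp
        omega

noncomputable def sprayA (n k : ℕ) :
    (Fin (k+1) → Fin n → ℝ) →ₗ[ℝ] (Fin (k+1) → Fin n → ℝ) where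
  toFun w β := if h : (β : ℕ) < k then (((β : ℕ) + 1 : ℝ)) • w ⟨(β : ℕ) + 1, by omega⟩ else 0
  map_add' u v := by funext β; by_cases h : (β : ℕ) < k <;> simp [h, smul_add]
  map_smul' c v := by
    funext β; by_cases h : (β : ℕ) < k <;> simp only [h, dif_pos, dif_neg, not_false_iff,
      RingHom.id_apply, Pi.smul_apply, smul_zero]
    rw [smul_comm]

noncomputable def sprayB (n k : ℕ) :
    (Fin n → ℝ) →ₗ[ℝ] (Fin (k+1) → Fin n → ℝ) where
  toFun v β := if (β : ℕ) < k then 0 else (-((k : ℝ) + 1)) • v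
  map_add' u v := by funext β; by_cases h : (β : ℕ) < k <;> simp [h, smul_add]
  map_smul' c v := by
    funext β; by_cases h : (β : ℕ) < k <;> simp only [h, if_pos, if_neg, not_false_iff,
      RingHom.id_apply, Pi.smul_apply, smul_zero]
    rw [smul_comm]

lemma semisprayK_eq (n k : ℕ) (G : (Fin (k+1) → (Fin n → ℝ)) → (Fin n → ℝ)) :
    semisprayK n k G = fun q => sprayA n k q + sprayB n k (G q) := by
  funext q β
  by_cases h : (β : ℕ) < k <;>
    simp [semisprayK, sprayA, sprayB, h]

/-- For a semispray `S` of order `k` and every smooth vector field `X`,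
`[S, J^α X] - J^α[S,X] + α J^{α-1}X ∈ Ker J` for all `α ∈ {1,...,k}`. -/
theorem stmt16 (n k : ℕ)
    (G : (Fin (k+1) → (Fin n → ℝ)) → (Fin n → ℝ)) (hG : ContDiff ℝ (⊤ : ℕ∞) G) :
    ∀ X : (Fin (k+1) → (Fin n → ℝ)) → (Fin (k+1) → (Fin n → ℝ)),
      ContDiff ℝ (⊤ : ℕ∞) X → ∀ α : ℕ, 1 ≤ α → α ≤ k →
      ∀ p, shiftJ n k
        (vbracket (semisprayK n k G) (fun q => (shiftJ n k ^ α) (X q)) p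
          - (shiftJ n k ^ α) (vbracket (semisprayK n k G) X p)
          + (α : ℝ) • (shiftJ n k ^ (α - 1)) (X p)) = 0 := by
  intro X hX α hα1 hαk p
  have hXd : DifferentiableAt ℝ X p := (hX.differentiable (by simp)).differentiableAt
  have hGd : DifferentiableAt ℝ G p := (hG.differentiable (by simp)).differentiableAt
  set DX := fderiv ℝ X p with hDX
  set DG := fderiv ℝ G p with hDG
  have hS : HasFDerivAt (semisprayK n k G)
      ((sprayA n k).toContinuousLinearMap + (sprayB n k).toContinuousLinearMap.comp DG) p := by
    rw [semisprayK_eq]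
    exact ((sprayA n k).toContinuousLinearMap.hasFDerivAt).add
      (((sprayB n k).toContinuousLinearMap.hasFDerivAt).comp p hGd.hasFDerivAt)
  have hJX : HasFDerivAt (fun q => (shiftJ n k ^ α) (X q))
      (((shiftJ n k ^ α).toContinuousLinearMap).comp DX) p :=
    ((shiftJ n k ^ α).toContinuousLinearMap.hasFDerivAt).comp p hXd.hasFDerivAt
  unfold vbracket
  rw [hJX.fderiv, hS.fderiv]
  funext i
  rw [shiftJ_apply]
  by_cases hi : (i : ℕ) = 0
  · rw [dif_pos hi]; rfl
  rw [dif_neg hi]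
  have hik : (i : ℕ) - 1 < k := by have := i.isLt; omega
  simp only [Pi.add_apply, Pi.sub_apply, Pi.smul_apply, shiftJ_pow_apply,
    ContinuousLinearMap.add_apply, ContinuousLinearMap.coe_comp', Function.comp_apply,
    LinearMap.coe_toContinuousLinearMap', sprayA, sprayB, LinearMap.coe_mk, AddHom.coe_mk,
    map_sub]
  have key : ∀ (v : Fin (k+1) → Fin n → ℝ) (a b : ℕ) (ha : a < k+1) (hb : b < k+1),
      a = b → v ⟨a, ha⟩ = v ⟨b, hb⟩ := by rintro v a b ha hb rfl; rfl
  simp only [Pi.zero_apply]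
  by_cases h1 : (i : ℕ) - 1 < α
  · by_cases h3 : (i : ℕ) - 1 + 1 < α
    · simp [h1, h3, hik, show (i : ℕ) - 1 < α - 1 by omega]
    · simp only [h1, hik, dite_true, if_true, dif_pos, if_pos, dif_neg h3,
        dif_neg (show ¬ (i : ℕ) - 1 < α - 1 by omega)]
      rw [key (X p) ((i : ℕ) - 1 + 1 - α) 0 (by omega) (by omega) (by omega),
        key (X p) ((i : ℕ) - 1 - (α - 1)) 0 (by omega) (by omega) (by omega)]
      have hc : (((i : ℕ) - 1 : ℕ) : ℝ) + 1 = (α : ℝ) := by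
        have : (i : ℕ) - 1 + 1 = α := by omega
        exact_mod_cast this
      rw [hc]
      module
  · simp only [dif_neg h1, hik, dite_true, if_true, dif_pos, if_pos,
      dif_pos (show (i : ℕ) - 1 - α < k by omega),
      if_pos (show (i : ℕ) - 1 - α < k by omega),
      dif_neg (show ¬ (i : ℕ) - 1 < α - 1 by omega),
      dif_neg (show ¬ (i : ℕ) - 1 + 1 < α by omega)]
    rw [key (X p) ((i : ℕ) - 1 + 1 - α) ((i : ℕ) - 1 - α + 1) (by omega) (by omega) (by omega),
      key (X p) ((i : ℕ) - 1 - (α - 1)) ((i : ℕ) - 1 - α + 1) (by omega) (by omega) (by omega)]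
    have hc : ((((i : ℕ) - 1 - α : ℕ)) : ℝ) + 1 + (α : ℝ) = (((i : ℕ) - 1 : ℕ) : ℝ) + 1 := by
      have : (i : ℕ) - 1 - α + 1 + α = (i : ℕ) - 1 + 1 := by omega
      exact_mod_cast this
    have hDXS : DX (semisprayK n k G p) = (fderiv ℝ X p) (semisprayK n k G p) := rfl
    rw [hDXS]
    match_scalars <;> push_cast <;> nlinarith [hc]
end

section
/- Let G : (ℝ^n)^{k+1} → ℝ^n be smooth and let x : I → ℝ^n solve the (k+1)-th order ODE x^{(k+1)}(t)/(k+1)! + G(x, x'/1!, ..., x^{(k)}/k!) = 0. If V : I × (-ε,ε) → ℝ^n is a smooth family of solutions of this ODE with V(·,0) = x, then ξ(t) = ∂V/∂s(t,0) satisfies the linearized equation ξ^{(k+1)}(t) + (k+1)! · Σ_{α=0}^{k} (1/α!) · D_{y_α}G(x, x'/1!, ..., x^{(k)}/k!) · ξ^{(α)}(t) = 0, where y_0 = x and D_{y_α}G denotes the partial Jacobian of G in its (α+1)-st block variable. -/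
open scoped BigOperators


section helpers
variable {F : Type*} [NormedAddCommGroup F] [NormedSpace ℝ F]

noncomputable def pdAux (v : ℝ × ℝ) (g : ℝ × ℝ → F) : ℝ × ℝ → F :=
  fun p => fderiv ℝ g p v

lemma pdAux_contDiff (v : ℝ × ℝ) {g : ℝ × ℝ → F} (hg : ContDiff ℝ (⊤ : ℕ∞) g) :
    ContDiff ℝ (⊤ : ℕ∞) (pdAux v g) :=
  (hg.fderiv_right (by simp)).clm_apply contDiff_const

lemma pdAux_iterate_contDiff (v : ℝ × ℝ) (m : ℕ) {g : ℝ × ℝ → F} (hg : ContDiff ℝ (⊤ : ℕ∞) g) :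
    ContDiff ℝ (⊤ : ℕ∞) ((pdAux v)^[m] g) := by
  induction m with
  | zero => exact hg
  | succ m ih => rw [Function.iterate_succ_apply']; exact pdAux_contDiff _ ih

lemma hasDerivAt_slice1 {g : ℝ × ℝ → F} {t s : ℝ} (hg : DifferentiableAt ℝ g (t, s)) :
    HasDerivAt (fun u => g (u, s)) (pdAux (1, 0) g (t, s)) t :=
  hg.hasFDerivAt.comp_hasDerivAt t ((hasDerivAt_id t).prodMk (hasDerivAt_const t s))

lemma hasDerivAt_slice2 {g : ℝ × ℝ → F} {t s : ℝ} (hg : DifferentiableAt ℝ g (t, s)) :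
    HasDerivAt (fun v => g (t, v)) (pdAux (0, 1) g (t, s)) s :=
  hg.hasFDerivAt.comp_hasDerivAt s ((hasDerivAt_const s t).prodMk (hasDerivAt_id s))

lemma iteratedDeriv_slice (m : ℕ) :
    ∀ (g : ℝ × ℝ → F), ContDiff ℝ (⊤ : ℕ∞) g → ∀ s t : ℝ,
      iteratedDeriv m (fun u => g (u, s)) t = ((pdAux (1, 0))^[m] g) (t, s) := by
  induction m with
  | zero => intro g hg s t; simp
  | succ m ih =>
    intro g hg s t
    rw [iteratedDeriv_succ']
    have hd : deriv (fun u => g (u, s)) = fun u => pdAux (1, 0) g (u, s) := by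
      funext u
      exact (hasDerivAt_slice1 (hg.differentiable (by simp) (u, s))).deriv
    rw [hd, ih _ (pdAux_contDiff _ hg), Function.iterate_succ_apply]

lemma pdAux_swap {g : ℝ × ℝ → F} (hg : ContDiff ℝ (⊤ : ℕ∞) g) (v w p : ℝ × ℝ) :
    pdAux w (pdAux v g) p = pdAux v (pdAux w g) p := by
  have hdiff : DifferentiableAt ℝ (fderiv ℝ g) p :=
    ((hg.fderiv_right (m := (⊤ : ℕ∞)) (by simp)).differentiable (by simp)) p
  have key : ∀ u : ℝ × ℝ, fderiv ℝ (pdAux u g) p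
      = (ContinuousLinearMap.apply ℝ F u).comp (fderiv ℝ (fderiv ℝ g) p) := fun u =>
    ((ContinuousLinearMap.apply ℝ F u).hasFDerivAt.comp p hdiff.hasFDerivAt).fderiv
  have hsymm := ((hg.contDiffAt (x := p)).isSymmSndFDerivAt (by rw [minSmoothness_of_isRCLikeNormedField]; exact WithTop.coe_le_coe.mpr le_top)) v w
  show fderiv ℝ (pdAux v g) p w = fderiv ℝ (pdAux w g) p v
  rw [key v, key w]
  exact hsymm.symm

lemma pdAux_iterate_swap (m : ℕ) : ∀ (g : ℝ × ℝ → F), ContDiff ℝ (⊤ : ℕ∞) g →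
    pdAux (0, 1) ((pdAux (1, 0))^[m] g) = (pdAux (1, 0))^[m] (pdAux (0, 1) g) := by
  induction m with
  | zero => intro g _; rfl
  | succ m ih =>
    intro g hg
    rw [Function.iterate_succ_apply, Function.iterate_succ_apply,
      ih _ (pdAux_contDiff _ hg)]
    congr 1
    funext p
    exact pdAux_swap hg _ _ p

end helpers

/-- The `k`-jet of a curve: `(x, x'/1!, ..., x^{(k)}/k!)`. -/
noncomputable def jetK (n k : ℕ) (x : ℝ → Fin n → ℝ) (t : ℝ) :
    Fin (k+1) → (Fin n → ℝ) :=
  fun α => (((α : ℕ).factorial : ℝ))⁻¹ • iteratedDeriv (α : ℕ) x t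

/-- Variation of a HODE: if `V(t,s)` is a smooth family of solutions of
`x^{(k+1)}/(k+1)! + G(x, x'/1!, ..., x^{(k)}/k!) = 0` with `V(·,0) = x`,
then `ξ(t) = ∂V/∂s(t,0)` satisfies the linearized equation
`ξ^{(k+1)} + (k+1)!·Σ_α (1/α!)·D_{y_α}G·ξ^{(α)} = 0`. -/
theorem stmt17 (n k : ℕ)
    (G : (Fin (k+1) → (Fin n → ℝ)) → (Fin n → ℝ)) (hG : ContDiff ℝ (⊤ : ℕ∞) G)
    (I : Set ℝ) (hI : IsOpen I) (ε : ℝ) (hε : 0 < ε)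
    (x : ℝ → Fin n → ℝ) (hx : ContDiff ℝ (⊤ : ℕ∞) x)
    (hxgeo : ∀ t ∈ I,
      (((k+1).factorial : ℝ))⁻¹ • iteratedDeriv (k+1) x t + G (jetK n k x t) = 0)
    (V : ℝ → ℝ → Fin n → ℝ)
    (hV : ContDiff ℝ (⊤ : ℕ∞) (fun p : ℝ × ℝ => V p.1 p.2))
    (hV0 : ∀ t, V t 0 = x t)
    (hVgeo : ∀ s ∈ Set.Ioo (-ε) ε, ∀ t ∈ I,
      (((k+1).factorial : ℝ))⁻¹ • iteratedDeriv (k+1) (fun u => V u s) t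
        + G (jetK n k (fun u => V u s) t) = 0)
    (ξ : ℝ → Fin n → ℝ) (hξ : ξ = fun t => deriv (fun s => V t s) 0) :
    ∀ t ∈ I,
      iteratedDeriv (k+1) ξ t
        + (((k+1).factorial : ℝ)) •
          ∑ α : Fin (k+1), (((α : ℕ).factorial : ℝ))⁻¹ •
            fderiv ℝ G (jetK n k x t)
              (Pi.single α (iteratedDeriv (α : ℕ) ξ t)) = 0 := by
  set W : ℝ × ℝ → (Fin n → ℝ) := fun p => V p.1 p.2 with hWdef
  have hW : ContDiff ℝ (⊤ : ℕ∞) W := hV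
  -- F1: t-slices
  have F1 : ∀ (s t : ℝ) (m : ℕ),
      iteratedDeriv m (fun u => V u s) t = ((pdAux (1, 0))^[m] W) (t, s) := by
    intro s t m
    exact iteratedDeriv_slice m W hW s t
  -- F2: ξ as a slice of the s-partial derivative
  have F2 : ξ = fun u => pdAux (0, 1) W (u, 0) := by
    funext u
    rw [hξ]
    exact (hasDerivAt_slice2 (hW.differentiable (by simp) (u, 0))).deriv
  -- F3: iterated derivatives of ξ
  have F3 : ∀ (m : ℕ) (t : ℝ),
      iteratedDeriv m ξ t = pdAux (0, 1) ((pdAux (1, 0))^[m] W) (t, 0) := by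
    intro m t
    rw [F2, iteratedDeriv_slice m _ (pdAux_contDiff _ hW) 0 t,
      pdAux_iterate_swap m W hW]
  -- F4: x as a slice
  have hx0 : x = fun u => W (u, 0) := by funext u; exact (hV0 u).symm
  have F4 : ∀ (m : ℕ) (t : ℝ),
      iteratedDeriv m x t = ((pdAux (1, 0))^[m] W) (t, 0) := by
    intro m t
    rw [hx0]
    exact iteratedDeriv_slice m W hW 0 t
  intro t ht
  -- the jet as a function of s
  set j : ℝ → (Fin (k+1) → (Fin n → ℝ)) :=
    fun s => fun α => (((α : ℕ).factorial : ℝ))⁻¹ • ((pdAux (1, 0))^[(α : ℕ)] W) (t, s)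
    with hjdef
  have hjet : ∀ s : ℝ, jetK n k (fun u => V u s) t = j s := by
    intro s
    funext α
    simp only [jetK, hjdef, F1]
  have hj0 : j 0 = jetK n k x t := by
    funext α
    simp only [jetK, hjdef, F4]
  -- the equation as a function of s
  set Φ : ℝ → (Fin n → ℝ) := fun s =>
    (((k+1).factorial : ℝ))⁻¹ • ((pdAux (1, 0))^[k+1] W) (t, s) + G (j s) with hΦdef
  have hΦ0 : ∀ s ∈ Set.Ioo (-ε) ε, Φ s = 0 := by
    intro s hs
    have := hVgeo s hs t ht
    rwa [F1 s t (k+1), hjet s] at this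
  -- derivative of Φ at 0 is 0
  have hderivΦ : deriv Φ 0 = 0 := by
    have hmem : Set.Ioo (-ε) ε ∈ nhds (0 : ℝ) :=
      (isOpen_Ioo).mem_nhds (by constructor <;> simpa using hε)
    have : Φ =ᶠ[nhds (0 : ℝ)] (fun _ => 0) :=
      Filter.eventuallyEq_of_mem hmem hΦ0
    rw [this.deriv_eq, deriv_const]
  -- compute the derivative of Φ at 0 via HasDerivAt
  set ξvec : Fin (k+1) → (Fin n → ℝ) :=
    fun α => (((α : ℕ).factorial : ℝ))⁻¹ • iteratedDeriv (α : ℕ) ξ t with hξvecdef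
  have hj' : HasDerivAt j ξvec 0 := by
    rw [hasDerivAt_pi]
    intro α
    have h1 : HasDerivAt (fun s => ((pdAux (1, 0))^[(α : ℕ)] W) (t, s))
        (pdAux (0, 1) ((pdAux (1, 0))^[(α : ℕ)] W) (t, 0)) 0 :=
      hasDerivAt_slice2 ((pdAux_iterate_contDiff _ _ hW).differentiable (by simp) (t, 0))
    have := h1.const_smul ((((α : ℕ).factorial : ℝ))⁻¹)
    rw [← F3] at this
    exact this
  have h2 : HasDerivAt (fun s => ((pdAux (1, 0))^[k+1] W) (t, s))
      (iteratedDeriv (k+1) ξ t) 0 := by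
    have h1 : HasDerivAt (fun s => ((pdAux (1, 0))^[k+1] W) (t, s))
        (pdAux (0, 1) ((pdAux (1, 0))^[k+1] W) (t, 0)) 0 :=
      hasDerivAt_slice2 ((pdAux_iterate_contDiff _ _ hW).differentiable (by simp) (t, 0))
    rwa [← F3] at h1
  have hGd : HasDerivAt (fun s => G (j s)) (fderiv ℝ G (jetK n k x t) ξvec) 0 := by
    have hGf : HasFDerivAt G (fderiv ℝ G (j 0)) (j 0) :=
      (hG.differentiable (by simp) (j 0)).hasFDerivAt
    have := hGf.comp_hasDerivAt 0 hj'
    rwa [hj0] at this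
  have hΦd : HasDerivAt Φ
      ((((k+1).factorial : ℝ))⁻¹ • iteratedDeriv (k+1) ξ t
        + fderiv ℝ G (jetK n k x t) ξvec) 0 :=
    (h2.const_smul ((((k+1).factorial : ℝ))⁻¹)).add hGd
  have key : (((k+1).factorial : ℝ))⁻¹ • iteratedDeriv (k+1) ξ t
      + fderiv ℝ G (jetK n k x t) ξvec = 0 := by
    rw [← hΦd.deriv]; exact hderivΦ
  -- rewrite the sum
  have hsum : ∑ α : Fin (k+1), (((α : ℕ).factorial : ℝ))⁻¹ •
      fderiv ℝ G (jetK n k x t) (Pi.single α (iteratedDeriv (α : ℕ) ξ t))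
      = fderiv ℝ G (jetK n k x t) ξvec := by
    have : ξvec = ∑ α : Fin (k+1), Pi.single α (ξvec α) := by
      funext β
      rw [Finset.sum_apply]
      exact (Fintype.sum_pi_single β ξvec).symm
    rw [this, map_sum]
    refine Finset.sum_congr rfl fun α _ => ?_
    rw [hξvecdef]
    rw [Pi.single_smul, map_smul]
  rw [hsum]
  have hfac : ((k+1).factorial : ℝ) ≠ 0 :=
    Nat.cast_ne_zero.mpr (Nat.factorial_ne_zero _)
  have := congrArg (fun y => (((k+1).factorial : ℝ)) • y) key
  simpa [smul_add, smul_smul, mul_inv_cancel₀ hfac] using this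
end
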